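/- Let $\sigma$ be a tanh-like non-linearity: smooth at $0$ with $\sigma_1 := \sigma'(0) \neq 0$, $\mathrm{sgn}(\sigma(z)\sigma''(z)) = -1$ a.e., sub-linear ($|\sigma(z)| \leq |\sigma_1 z|$ for all $z$), and satisfying $\sigma_1 z + \sigma_3 z^3 \leq \sigma(z) \leq \sigma_1 z + \sigma_3 z^3 + C z^4$ for all $z \geq 0$ where $\sigma_3 = \sigma'''(0)/6$. Then criticality (i.e., existence of $K_* \geq 0$ with $K_* = C_b + C_W \langle \sigma^2 \rangle_{K_*}$ and $\chi_{\|}(K_*) = \chi_\perp(K_*) = 1$) is achieved if and only if $K_* = 0$, $C_b = 0$, and $C_W = \sigma_1^{-2}$. -/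

import Mathlib

open MeasureTheory ProbabilityTheory

/-- The Gaussian average `⟨f⟩_K = 𝔼[f(√K Z)]`, `Z ∼ 𝒩(0,1)`. -/
noncomputable def gAvg (f : ℝ → ℝ) (K : ℝ) : ℝ :=
  ∫ z, f (Real.sqrt K * z) ∂ gaussianReal 0 1

/-- `χ_∥(K) = (C_W/2) ⟨(σ²)''⟩_K`. -/
noncomputable def chiPar (CW : ℝ) (σ : ℝ → ℝ) (K : ℝ) : ℝ :=
  CW / 2 * gAvg (deriv (deriv (fun w => σ w ^ 2))) K

/-- `χ_⊥(K) = C_W ⟨(σ')²⟩_K`. -/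
noncomputable def chiPerp (CW : ℝ) (σ : ℝ → ℝ) (K : ℝ) : ℝ :=
  CW * gAvg (fun w => (deriv σ w) ^ 2) K

lemma gAvg_zero (f : ℝ → ℝ) : gAvg f 0 = f 0 := by
  simp [gAvg, Real.sqrt_zero]

lemma dd_sq (σ : ℝ → ℝ) (hσ : ContDiff ℝ (⊤ : ℕ∞) σ) :
    deriv (deriv (fun w => σ w ^ 2)) = fun w =>
      2 * ((deriv σ w) ^ 2 + σ w * deriv (deriv σ) w) := by
  have h1 : Differentiable ℝ σ := hσ.differentiable (by simp)
  have h2 : Differentiable ℝ (deriv σ) :=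
    (contDiff_infty_iff_deriv.mp (hσ.of_le (by simp))).2.differentiable (by simp)
  have e1 : deriv (fun w => σ w ^ 2) = fun w => 2 * (σ w * deriv σ w) := by
    funext w
    rw [deriv_fun_pow (h1 w) 2]
    ring
  rw [e1]
  funext w
  rw [deriv_const_mul (d := fun y => σ y * deriv σ y) _ ((h1 w).mul (h2 w)), deriv_fun_mul (h1 w) (h2 w)]
  ring

/-- for a tanh-like non-linearity, criticality (existence of `K⋆ ≥ 0` with
`K⋆ = C_b + C_W ⟨σ²⟩_{K⋆}` and `χ_∥(K⋆) = χ_⊥(K⋆) = 1`) holds iff `C_b = 0` and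
`C_W = σ₁⁻²`; moreover any critical `K⋆` must equal `0`. -/
theorem stmt12 (σ : ℝ → ℝ) (hσ : ContDiff ℝ (⊤ : ℕ∞) σ) (hσ1 : deriv σ 0 ≠ 0)
    (hsign : ∀ᵐ z : ℝ, σ z * deriv (deriv σ) z < 0)
    (hsub : ∀ z : ℝ, |σ z| ≤ |deriv σ 0 * z|)
    (hTaylor : ∃ C : ℝ, 0 ≤ C ∧ ∀ z : ℝ, 0 ≤ z →
      deriv σ 0 * z + (iteratedDeriv 3 σ 0 / 6) * z ^ 3 ≤ σ z ∧
      σ z ≤ deriv σ 0 * z + (iteratedDeriv 3 σ 0 / 6) * z ^ 3 + C * z ^ 4)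
    (hint : ∀ K : ℝ, 0 < K →
      Integrable (fun z => (deriv σ (Real.sqrt K * z)) ^ 2) (gaussianReal 0 1) ∧
      Integrable (fun z => σ (Real.sqrt K * z) * deriv (deriv σ) (Real.sqrt K * z))
        (gaussianReal 0 1) ∧
      Integrable (fun z => deriv (deriv (fun w => σ w ^ 2)) (Real.sqrt K * z))
        (gaussianReal 0 1))
    (Cb CW : ℝ) (hCb : 0 ≤ Cb) (hCW : 0 < CW) :
    ((∃ K : ℝ, 0 ≤ K ∧ K = Cb + CW * gAvg (fun w => σ w ^ 2) K ∧
        chiPar CW σ K = 1 ∧ chiPerp CW σ K = 1) ↔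
      (Cb = 0 ∧ CW = ((deriv σ 0) ^ 2)⁻¹)) ∧
    (∀ K : ℝ, 0 ≤ K → K = Cb + CW * gAvg (fun w => σ w ^ 2) K →
      chiPar CW σ K = 1 → chiPerp CW σ K = 1 → K = 0) := by
  -- σ 0 = 0
  have hσ0 : σ 0 = 0 := by
    have := hsub 0
    simp only [mul_zero, abs_zero] at this
    exact abs_eq_zero.mp (le_antisymm this (abs_nonneg _))
  have hdd := dd_sq σ hσ
  -- values at K = 0
  have hPar0 : chiPar CW σ 0 = CW * (deriv σ 0) ^ 2 := by
    rw [chiPar, gAvg_zero, hdd]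
    simp [hσ0]
    ring
  have hPerp0 : chiPerp CW σ 0 = CW * (deriv σ 0) ^ 2 := by
    rw [chiPerp, gAvg_zero]
  have hG0 : gAvg (fun w => σ w ^ 2) 0 = 0 := by
    rw [gAvg_zero, hσ0]; norm_num
  -- part 2 : any critical K is 0
  have part2 : ∀ K : ℝ, 0 ≤ K → K = Cb + CW * gAvg (fun w => σ w ^ 2) K →
      chiPar CW σ K = 1 → chiPerp CW σ K = 1 → K = 0 := by
    intro K hK _ hpar hperp
    by_contra hK0
    have hKpos : 0 < K := lt_of_le_of_ne hK (Ne.symm hK0)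
    set c := Real.sqrt K with hc
    have hcpos : 0 < c := Real.sqrt_pos.mpr hKpos
    obtain ⟨hi1, hi2, hi3⟩ := hint K hKpos
    -- a.e. negativity w.r.t. the Gaussian
    have hvol : ∀ᵐ z ∂ (volume : Measure ℝ), σ (c * z) * deriv (deriv σ) (c * z) < 0 := by
      rw [ae_iff] at hsign ⊢
      have hpre : {z : ℝ | ¬ σ (c * z) * deriv (deriv σ) (c * z) < 0}
          = (fun z => c * z) ⁻¹' {z : ℝ | ¬ σ z * deriv (deriv σ) z < 0} := rfl
      rw [hpre, Real.volume_preimage_mul_left hcpos.ne', hsign, mul_zero]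
    have hae : ∀ᵐ z ∂ (gaussianReal 0 1), σ (c * z) * deriv (deriv σ) (c * z) < 0 :=
      (gaussianReal_absolutelyContinuous 0 one_ne_zero).ae_le hvol
    -- B := ∫ σ σ'' < 0
    set B := ∫ z, σ (c * z) * deriv (deriv σ) (c * z) ∂ gaussianReal 0 1 with hB
    have hBneg : B < 0 := by
      have hfi : Integrable (fun z => -(σ (c * z) * deriv (deriv σ) (c * z)))
          (gaussianReal 0 1) := hi2.neg
      have hnn : 0 ≤ᵐ[gaussianReal 0 1]
          fun z => -(σ (c * z) * deriv (deriv σ) (c * z)) := by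
        filter_upwards [hae] with z hz
        simp only [Pi.zero_apply]
        linarith
      have hpos : 0 < ∫ z, -(σ (c * z) * deriv (deriv σ) (c * z)) ∂ gaussianReal 0 1 := by
        rw [integral_pos_iff_support_of_nonneg_ae hnn hfi]
        set S := Function.support fun z => -(σ (c * z) * deriv (deriv σ) (c * z))
        have hcompl : (gaussianReal 0 1) Sᶜ = 0 := by
          refine measure_mono_null ?_ (ae_iff.mp hae)
          intro z hz
          simp only [Set.mem_compl_iff, Function.mem_support, not_not, neg_eq_zero, S] at hz
          simp only [Set.mem_setOf_eq, hz, lt_self_iff_false, not_false_iff]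
        by_contra h
        push_neg at h
        have hS0 : (gaussianReal 0 1) S = 0 := le_antisymm h (by simp)
        have : (gaussianReal 0 1) Set.univ = 0 := by
          have := measure_union_le (μ := gaussianReal 0 1) S Sᶜ
          rwa [Set.union_compl_self, hS0, hcompl, add_zero, le_zero_iff] at this
        simp at this
      rw [integral_neg] at hpos
      linarith
    -- χ_∥ = χ_⊥ + CW * B
    have hsplit : chiPar CW σ K = chiPerp CW σ K + CW * B := by
      rw [chiPar, chiPerp, gAvg, gAvg, hdd]
      have : (∫ z, 2 * ((deriv σ (c * z)) ^ 2 + σ (c * z) * deriv (deriv σ) (c * z))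
            ∂ gaussianReal 0 1)
          = 2 * ((∫ z, (deriv σ (c * z)) ^ 2 ∂ gaussianReal 0 1) + B) := by
        rw [integral_const_mul, integral_add hi1 hi2]
      simp only [← hc] at this ⊢
      rw [this]
      ring
    rw [hpar, hperp] at hsplit
    nlinarith
  refine ⟨?_, part2⟩
  constructor
  · rintro ⟨K, hK, heq, hpar, hperp⟩
    have hK0 : K = 0 := part2 K hK heq hpar hperp
    subst hK0
    have hCb0 : Cb = 0 := by
      rw [hG0, mul_zero, add_zero] at heq
      exact heq.symm
    rw [hPerp0] at hperp
    exact ⟨hCb0, eq_inv_of_mul_eq_one_left hperp⟩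
  · rintro ⟨hCb0, hCW0⟩
    refine ⟨0, le_refl 0, ?_, ?_, ?_⟩
    · rw [hG0, hCb0]; ring
    · rw [hPar0, hCW0]
      field_simp
    · rw [hPerp0, hCW0]
      field_simp
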